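/- arXiv:2208.11837 — 4 statements merged into one kernel-verified Lean document; each statement's English description precedes it below -/
import Mathlib

section
/- Let d be a positive integer greater than 1 and let C be a cycle for the d-map with |C| = n > 1. Then the crossing number of C is at most the number of distinct leading base-d digits of elements of C: η(C) ≤ dig(C). -/
open MeasureTheory

noncomputable section

/-- The `d`-map `x ↦ d·x (mod 1)` on the circle `ℝ/ℤ`. -/
def dMap (d : ℕ) (x : UnitAddCircle) : UnitAddCircle := d • x

/-- A cycle for the `d`-map: a finite nonempty set on which the `d`-map
restricts to a transitive permutation. -/
def IsCycle (d : ℕ) (C : Finset UnitAddCircle) : Prop :=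
  C.Nonempty ∧ (∀ c ∈ C, dMap d c ∈ C) ∧
    ∀ x ∈ C, ∀ y ∈ C, ∃ k : ℕ, (dMap d)^[k] x = y

/-- A continuous circle map of degree `m`: it admits a continuous lift
`F : ℝ → ℝ` with `F (x + 1) = F x + m`. -/
def HasDegree (f : UnitAddCircle → UnitAddCircle) (m : ℕ) : Prop :=
  Continuous f ∧ ∃ F : ℝ → ℝ, Continuous F ∧ (∀ x : ℝ, F (x + 1) = F x + m) ∧
    ∀ x : ℝ, f (x : UnitAddCircle) = ((F x : ℝ) : UnitAddCircle)

/-- The degree of a finite set `C` (e.g. a cycle): the smallest `m` such that some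
continuous degree-`m` circle map agrees with the `d`-map on `C`. -/
def cycleDeg (d : ℕ) (C : Finset UnitAddCircle) : ℕ :=
  sInf {m : ℕ | ∃ f : UnitAddCircle → UnitAddCircle, HasDegree f m ∧ ∀ c ∈ C, f c = dMap d c}

/-- `E_{m,d}`: the closure of the union of all degree-`m` cycles for the `d`-map. -/
def cycleClosure (m d : ℕ) : Set UnitAddCircle :=
  closure {x | ∃ C : Finset UnitAddCircle, IsCycle d C ∧ cycleDeg d C = m ∧ x ∈ C}
/-- The cyclic successor `i ↦ i + 1 (mod n)` on `Fin n`. -/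
def cyclicSucc {n : ℕ} (i : Fin n) : Fin n := ⟨(i.1 + 1) % n, Nat.mod_lt _ i.pos⟩

/-- For a cycle listed as `0 ≤ c 0 < c 1 < … < c (n-1) < 1`, the pair
`(c i, c (i+1))` (indices cyclic, so `c n := c 0`) is a *crossing* if
`0 < frac (d · c (i+1)) < frac (d · c i) < 1`. -/
def IsCrossing (d : ℕ) {n : ℕ} (c : Fin n → ℝ) (i : Fin n) : Prop :=
  0 < Int.fract (d * c (cyclicSucc i)) ∧
    Int.fract (d * c (cyclicSucc i)) < Int.fract (d * c i) ∧
    Int.fract (d * c i) < 1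

/-- The crossing number `η(C)`: the number of crossings. -/
def crossingNumber (d : ℕ) {n : ℕ} (c : Fin n → ℝ) : ℕ :=
  Nat.card {i : Fin n // IsCrossing d c i}

/-- `dig(C)`: the number of digits `j ∈ {0, …, d-1}` that occur as the leading base-`d`
digit of some element of the cycle, i.e. such that `C ∩ [j/d, (j+1)/d) ≠ ∅`. -/
def digitCount (d : ℕ) {n : ℕ} (c : Fin n → ℝ) : ℕ :=
  Nat.card {j : Fin d // ∃ i : Fin n, c i ∈ Set.Ico ((j : ℝ) / d) (((j : ℝ) + 1) / d)}


/-!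
Along the sorted cycle the leading digit `⌊d·c_i⌋` is non-decreasing, and a crossing
`(c_i, c_{i+1})` with `i + 1 < n` makes it jump strictly, since `d·c_{i+1} > d·c_i` while the
fractional part drops. Hence sending a crossing `(c_i, c_{i+1})` to the leading digit of
`c_{i+1}` is injective: two crossings before the wrap-around land on strictly increasing
digits, and the wrap-around crossing lands on the digit of `c_1`, which is smaller than the
image of every other crossing.
-/

open Set

theorem Nat.floor_lt_floor_of_lt_of_fract_lt {R : Type*} [Field R] [LinearOrder R]
    [IsStrictOrderedRing R] [FloorRing R] {x y : R} (hx : 0 ≤ x) (hxy : x < y)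
    (hfract : Int.fract y < Int.fract x) : ⌊x⌋₊ < ⌊y⌋₊ := by
  have hy : 0 ≤ y := hx.trans hxy.le
  have key : (⌊x⌋₊ : R) < ⌊y⌋₊ := by
    rw [natCast_floor_eq_intCast_floor hx, natCast_floor_eq_intCast_floor hy]
    rw [Int.fract, Int.fract] at hfract
    linarith
  exact_mod_cast key

def leadingDigit (d : ℕ) (x : ℝ) : ℕ := ⌊(d : ℝ) * x⌋₊

section LeadingDigit

variable {d : ℕ} {x : ℝ}

theorem leadingDigit_lt (hd : 0 < d) (hx : x ∈ Ico (0 : ℝ) 1) : leadingDigit d x < d := by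
  have hd' : (0 : ℝ) < d := by exact_mod_cast hd
  refine (Nat.floor_lt (mul_nonneg hd'.le hx.1)).2 ?_
  nlinarith [hx.2]

theorem mem_Ico_leadingDigit (hd : 0 < d) (hx : 0 ≤ x) :
    x ∈ Ico ((leadingDigit d x : ℝ) / d) (((leadingDigit d x : ℝ) + 1) / d) := by
  have hd' : (0 : ℝ) < d := by exact_mod_cast hd
  rw [mem_Ico, div_le_iff₀ hd', lt_div_iff₀ hd', mul_comm x]
  exact ⟨Nat.floor_le (mul_nonneg hd'.le hx), Nat.lt_floor_add_one _⟩

theorem leadingDigit_mono : Monotone (leadingDigit d) := fun _ _ h =>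
  Nat.floor_mono (mul_le_mul_of_nonneg_left h (Nat.cast_nonneg d))

end LeadingDigit

section CyclicSucc

variable {n : ℕ} (i : Fin n)

theorem cyclicSucc_val_of_lt (h : i.val + 1 < n) : (cyclicSucc i).val = i.val + 1 :=
  Nat.mod_eq_of_lt h

theorem cyclicSucc_val_of_not_lt (h : ¬ i.val + 1 < n) : (cyclicSucc i).val = 0 := by
  have : i.val + 1 = n := by omega
  simp [cyclicSucc, this]

end CyclicSucc

section Crossing

variable {d n : ℕ} {c : Fin n → ℝ}

theorem IsCrossing.leadingDigit_lt (hd : 0 < d) (hc : StrictMono c) (h0 : ∀ i, 0 ≤ c i)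
    {i : Fin n} (hi : IsCrossing d c i) (hlast : i.val + 1 < n) :
    leadingDigit d (c i) < leadingDigit d (c (cyclicSucc i)) := by
  have hlt : i < cyclicSucc i := by
    rw [Fin.lt_def, cyclicSucc_val_of_lt i hlast]
    omega
  exact Nat.floor_lt_floor_of_lt_of_fract_lt (mul_nonneg (Nat.cast_nonneg d) (h0 i))
    (mul_lt_mul_of_pos_left (hc hlt) (by exact_mod_cast hd)) hi.2.1

theorem leadingDigit_cyclicSucc_injOn (hd : 0 < d) (hc : StrictMono c) (h0 : ∀ i, 0 ≤ c i) :
    InjOn (fun i => leadingDigit d (c (cyclicSucc i))) {i | IsCrossing d c i} := by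
  have hmono : Monotone (leadingDigit d ∘ c) := leadingDigit_mono.comp hc.monotone
  suffices ne : ∀ a b, IsCrossing d c a → IsCrossing d c b → a < b →
      leadingDigit d (c (cyclicSucc a)) ≠ leadingDigit d (c (cyclicSucc b)) by
    intro a ha b hb hab
    rcases lt_trichotomy a b with h | h | h
    · exact absurd hab (ne a b ha hb h)
    · exact h
    · exact absurd hab.symm (ne b a hb ha h)
  intro a b ha hb hab
  have ha_last : a.val + 1 < n := by omega
  have ha_jump := ha.leadingDigit_lt hd hc h0 ha_last
  by_cases hb_last : b.val + 1 < n
  · have hab' : cyclicSucc a ≤ b := by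
      rw [Fin.le_def, cyclicSucc_val_of_lt a ha_last]
      exact hab
    exact ((hmono hab').trans_lt (hb.leadingDigit_lt hd hc h0 hb_last)).ne
  · have hba : cyclicSucc b ≤ a := by
      rw [Fin.le_def, cyclicSucc_val_of_not_lt b hb_last]
      exact Nat.zero_le _
    exact ((hmono hba).trans_lt ha_jump).ne'

end Crossing

theorem crossingNumber_le_digitCount_general (d n : ℕ) (hd : 1 < d)
    (c : Fin n → ℝ) (hmono : StrictMono c) (hrange : ∀ i, c i ∈ Set.Ico (0 : ℝ) 1) :
    crossingNumber d c ≤ digitCount d c := by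
  have hd0 : 0 < d := by omega
  have h0 : ∀ i, 0 ≤ c i := fun i => (hrange i).1
  let digitOf (i : {i : Fin n // IsCrossing d c i}) :
      {j : Fin d // ∃ i : Fin n, c i ∈ Set.Ico ((j : ℝ) / d) (((j : ℝ) + 1) / d)} :=
    ⟨⟨leadingDigit d (c (cyclicSucc i.1)), leadingDigit_lt hd0 (hrange _)⟩,
      cyclicSucc i.1, mem_Ico_leadingDigit hd0 (h0 _)⟩
  refine Nat.card_le_card_of_injective digitOf fun a b hab => Subtype.ext ?_
  exact leadingDigit_cyclicSucc_injOn hd0 hmono h0 a.2 b.2 (congrArg (fun j => j.1.1) hab)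

/-- Lemma 2: for a cycle with more than one element, `η(C) ≤ dig(C)`. -/
theorem crossingNumber_le_digitCount (d n : ℕ) (hd : 1 < d) (hn : 1 < n)
    (c : Fin n → ℝ) (hmono : StrictMono c) (hrange : ∀ i, c i ∈ Set.Ico (0 : ℝ) 1)
    (C : Finset UnitAddCircle)
    (hC : (C : Set UnitAddCircle) = Set.range (fun i : Fin n => ((c i : ℝ) : UnitAddCircle)))
    (hcyc : IsCycle d C) :
    crossingNumber d c ≤ digitCount d c :=
  crossingNumber_le_digitCount_general d n hd c hmono hrange
end
end

section
/- Let m and d be positive integers with d > 1 and 1 ≤ m ≤ d. Then the Hausdorff dimension of A_{m,d} equals (log m)/(log d). -/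
/-!
For `α = log m / log d`, the `m ^ n` digit sequences of length `n` cut `A_{m,d}` into pieces of
diameter at most `d ^ (-n)`, whence `μH[α] A_{m,d} ≤ 1` and `dimH A_{m,d} ≤ α`.

Conversely, for `1 < m < d`, reading base-`d` digits in base `m` maps `A_{m,d}` onto `[0, 1]`, and
this map is `α`-Hölder: if two digit sequences first differ at place `n`, their base-`m` values
are at most `m ^ (-n)` apart, whereas their base-`d` values are at least
`(d - m) / (d - 1) * d ^ (-n-1)` apart, since tails with digits below `m` sum to at most
`(m - 1) / (d - 1) < 1` units of place `n`. A Hölder map of exponent `α` divides the Hausdorff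
dimension by at most `α`, and `[0, 1]` has dimension `1`.
-/

open MeasureTheory

noncomputable section

/-- `A_{m,d}` as a subset of `ℝ`: real numbers in `[0,1]` admitting a base-`d`
expansion `x = ∑_{i≥1} b_i d^{-i}` all of whose digits `b_i` lie in `{0, 1, …, m-1}`. -/
def lowDigitSet (m d : ℕ) : Set ℝ :=
  {x | ∃ b : ℕ → ℕ, (∀ i, b i < m) ∧ x = ∑' i : ℕ, (b i : ℝ) / (d : ℝ) ^ (i + 1)}

open Set Filter Topology
open scoped ENNReal NNReal

lemma Real.inv_pow_rpow_logb {b x : ℝ} (hb : 0 < b) (hb₁ : b ≠ 1) (hx : 0 < x) (n : ℕ) :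
    ((b ^ n)⁻¹) ^ Real.logb b x = (x ^ n)⁻¹ := by
  rw [Real.inv_rpow (by positivity), ← Real.rpow_pow_comm hb.le, Real.rpow_logb hb hb₁ hx]

theorem dimH_le_logb_of_covers {X : Type*} [EMetricSpace X] {s : Set X} {N : ℕ} {ρ : ℝ}
    (hN : 0 < N) (hρ : 1 < ρ) {ι : ℕ → Type*} [∀ n, Fintype (ι n)]
    (hcard : ∀ n, Fintype.card (ι n) ≤ N ^ n) (t : ∀ n, ι n → Set X)
    (ht : ∀ n i, Metric.ediam (t n i) ≤ ENNReal.ofReal (ρ ^ n)⁻¹)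
    (hs : ∀ n, s ⊆ ⋃ i, t n i) :
    dimH s ≤ ENNReal.ofReal (Real.logb ρ N) := by
  borelize X
  set α := Real.logb ρ N
  have hα : 0 ≤ α := Real.logb_nonneg hρ (by exact_mod_cast hN)
  have hsum : ∀ n, ∑ i, Metric.ediam (t n i) ^ α ≤ 1 := fun n => calc
    ∑ i, Metric.ediam (t n i) ^ α ≤ ∑ _i : ι n, ENNReal.ofReal ((N : ℝ) ^ n)⁻¹ := by
      gcongr with i
      rw [← Real.inv_pow_rpow_logb (by linarith) hρ.ne' (by exact_mod_cast hN),
        ← ENNReal.ofReal_rpow_of_nonneg (by positivity) hα]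
      gcongr
      exact ht n i
    _ ≤ (N : ℝ≥0∞) ^ n * ENNReal.ofReal ((N : ℝ) ^ n)⁻¹ := by
      rw [Finset.sum_const, nsmul_eq_mul, Finset.card_univ]
      gcongr
      exact_mod_cast hcard n
    _ = 1 := by
      rw [← ENNReal.ofReal_natCast, ← ENNReal.ofReal_pow (by positivity),
        ← ENNReal.ofReal_mul (by positivity), mul_inv_cancel₀ (by positivity), ENNReal.ofReal_one]
  have hr : Tendsto (fun n : ℕ => ENNReal.ofReal (ρ ^ n)⁻¹) atTop (𝓝 0) := by
    simpa using ENNReal.tendsto_ofReal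
      (tendsto_inv_atTop_zero.comp (tendsto_pow_atTop_atTop_of_one_lt hρ))
  have hμ : μH[α] s ≤ 1 := calc
    μH[α] s ≤ liminf (fun n => ∑ i, Metric.ediam (t n i) ^ α) atTop :=
      Measure.hausdorffMeasure_le_liminf_sum α s _ hr t (.of_forall ht) (.of_forall hs)
    _ ≤ 1 := liminf_le_of_frequently_le' (.of_forall hsum)
  exact dimH_le_of_hausdorffMeasure_ne_top (d := α.toNNReal)
    (by rw [Real.coe_toNNReal _ hα]; exact ne_top_of_le_ne_top ENNReal.one_ne_top hμ)

theorem dimH_range_le_of_edist_le {ι X Y : Type*} [EMetricSpace X] [EMetricSpace Y]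
    {f : ι → X} {g : ι → Y} {C r : ℝ≥0} (hr : 0 < r)
    (h : ∀ a b, edist (f a) (f b) ≤ C * edist (g a) (g b) ^ (r : ℝ)) :
    dimH (range f) ≤ dimH (range g) / r := by
  cases isEmpty_or_nonempty ι
  · simp [range_eq_empty]
  have hfg : (f ∘ Function.invFun g) ∘ g = f := funext fun a => by
    have := h (Function.invFun g (g a)) a
    rwa [Function.invFun_eq (f := g) ⟨a, rfl⟩, edist_self, ENNReal.zero_rpow_of_pos (by positivity),
      mul_zero, nonpos_iff_eq_zero, edist_eq_zero] at this
  have hF : HolderOnWith C r (f ∘ Function.invFun g) (range g) := by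
    rintro _ ⟨a, rfl⟩ _ ⟨b, rfl⟩
    simpa only [Function.comp_apply, Function.invFun_eq ⟨a, rfl⟩, Function.invFun_eq ⟨b, rfl⟩]
      using h (Function.invFun g (g a)) (Function.invFun g (g b))
  rw [← hfg, range_comp]
  exact hF.dimH_image_le hr

theorem Real.one_le_dimH_range_ofDigits {b : ℕ} (hb : 1 < b) :
    1 ≤ dimH (range (Real.ofDigits (b := b))) :=
  calc (1 : ℝ≥0∞) = dimH (Icc (0 : ℝ) 1) := by
        rw [Real.dimH_of_nonempty_interior (by simp), Module.finrank_self, Nat.cast_one]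
    _ ≤ dimH (range (Real.ofDigits (b := b))) := by
        rw [← image_univ]
        exact dimH_mono (Real.ofDigits_SurjOn hb)

def ofLowDigits {m d : ℕ} (hmd : m ≤ d) (a : ℕ → Fin m) : ℝ :=
  Real.ofDigits fun i => Fin.castLE hmd (a i)

theorem lowDigitSet_eq_range {m d : ℕ} (hmd : m ≤ d) :
    lowDigitSet m d = range (ofLowDigits hmd) := by
  ext x
  simp only [lowDigitSet, ofLowDigits, Real.ofDigits, Real.ofDigitsTerm, mem_range,
    Fin.val_castLE, div_eq_mul_inv]
  constructor
  · rintro ⟨b, hb, rfl⟩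
    exact ⟨fun i => ⟨b i, hb i⟩, rfl⟩
  · rintro ⟨a, rfl⟩
    exact ⟨fun i => a i, fun i => (a i).isLt, rfl⟩

theorem ofLowDigits_self {m : ℕ} : ofLowDigits (le_refl m) = Real.ofDigits := by
  ext a
  simp [ofLowDigits]

theorem ofLowDigits_le {m d : ℕ} (hd : 1 < d) (hmd : m ≤ d) (a : ℕ → Fin m) :
    ofLowDigits hmd a ≤ (m - 1) / (d - 1) := by
  have hd' : (1 : ℝ) < d := by exact_mod_cast hd
  -- compare termwise with `0.(d-1)(d-1)… = 1`
  calc ofLowDigits hmd a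
      ≤ ∑' i, (m - 1) / (d - 1) * Real.ofDigitsTerm (fun _ => (⟨d - 1, by omega⟩ : Fin d)) i := by
        refine Summable.tsum_mono Real.summable_ofDigitsTerm
          (Real.summable_ofDigitsTerm.mul_left _) fun i => ?_
        have ha : ((a i : ℕ) : ℝ) ≤ m - 1 := le_sub_iff_add_le.2 (by exact_mod_cast (a i).isLt)
        simp only [Real.ofDigitsTerm, Fin.val_castLE]
        rw [Nat.cast_sub hd.le, Nat.cast_one, ← mul_assoc, div_mul_cancel₀ _ (by linarith)]
        gcongr
    _ = (m - 1) / (d - 1) := by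
        rw [tsum_mul_left, ← Real.ofDigits, Real.ofDigits_const_last_eq_one' hd, mul_one]

theorem ofLowDigits_sub_ofLowDigits_ge {m d : ℕ} (hd : 1 < d) (hmd : m ≤ d) {a b : ℕ → Fin m}
    {n : ℕ} (hab : ∀ i < n, a i = b i) (hlt : b n < a n) :
    (d - m) / (d - 1) / d ^ (n + 1) ≤ ofLowDigits hmd a - ofLowDigits hmd b := by
  have hd' : (1 : ℝ) < d := by exact_mod_cast hd
  have hsplit : ∀ c : ℕ → Fin m, ofLowDigits hmd c =
      ∑ i ∈ Finset.range n, Real.ofDigitsTerm (fun i => Fin.castLE hmd (c i)) i +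
        (c n : ℕ) * ((d : ℝ) ^ (n + 1))⁻¹ +
        ((d : ℝ) ^ (n + 1))⁻¹ * ofLowDigits hmd (fun i => c (i + (n + 1))) := fun c => by
    rw [ofLowDigits, Real.ofDigits_eq_sum_add_ofDigits _ (n + 1), Finset.sum_range_succ]; rfl
  have hprefix : ∑ i ∈ Finset.range n, Real.ofDigitsTerm (fun i => Fin.castLE hmd (a i)) i
      = ∑ i ∈ Finset.range n, Real.ofDigitsTerm (fun i => Fin.castLE hmd (b i)) i :=
    Finset.sum_congr rfl fun i hi => by simp [Real.ofDigitsTerm, hab i (Finset.mem_range.mp hi)]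
  have hdigit : (1 : ℝ) ≤ (a n : ℕ) - (b n : ℕ) := le_sub_iff_add_le'.2 (by exact_mod_cast hlt)
  have htail_a : 0 ≤ ofLowDigits hmd (fun i => a (i + (n + 1))) := Real.ofDigits_nonneg _
  have htail_b := ofLowDigits_le hd hmd (fun i => b (i + (n + 1)))
  have hκ : ((d : ℝ) - m) / (d - 1) = 1 - (m - 1) / (d - 1) := by
    have : (d : ℝ) - 1 ≠ 0 := by linarith
    field_simp; ring
  calc ((d : ℝ) - m) / (d - 1) / d ^ (n + 1)
      = ((d : ℝ) ^ (n + 1))⁻¹ * (1 + (0 - (m - 1) / (d - 1))) := by rw [hκ]; ring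
    _ ≤ ((d : ℝ) ^ (n + 1))⁻¹ * (((a n : ℕ) - (b n : ℕ)) +
          (ofLowDigits hmd (fun i => a (i + (n + 1))) -
            ofLowDigits hmd (fun i => b (i + (n + 1))))) := by gcongr
    _ = ofLowDigits hmd a - ofLowDigits hmd b := by rw [hsplit a, hsplit b, hprefix]; ring

theorem dimH_range_ofLowDigits_le {m d : ℕ} (hd : 1 < d) (hm : 0 < m) (hmd : m ≤ d) :
    dimH (range (ofLowDigits hmd)) ≤ ENNReal.ofReal (Real.logb d m) := by
  refine dimH_le_logb_of_covers hm (by exact_mod_cast hd) (ι := fun n => Fin n → Fin m)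
    (fun n => by simp) (fun n σ => ofLowDigits hmd '' {a | ∀ i : Fin n, a i = σ i})
    (fun n σ => Metric.ediam_image_le_iff.2 fun a ha b hb => ?_) fun n => ?_
  · rw [edist_dist, Real.dist_eq]
    refine ENNReal.ofReal_le_ofReal (Real.abs_ofDigits_sub_ofDigits_le fun i hi => ?_)
    rw [ha ⟨i, hi⟩, hb ⟨i, hi⟩]
  · rintro _ ⟨a, rfl⟩
    exact mem_iUnion.2 ⟨fun i => a i, mem_image_of_mem _ fun i => rfl⟩

theorem dist_ofDigits_le {m d : ℕ} (hm : 1 < m) (hmd : m < d) (a b : ℕ → Fin m) :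
    dist (Real.ofDigits a) (Real.ofDigits b) ≤
      m / (((d : ℝ) - m) / (d - 1)) ^ Real.logb d m *
        dist (ofLowDigits hmd.le a) (ofLowDigits hmd.le b) ^ Real.logb d m := by
  set κ : ℝ := ((d : ℝ) - m) / (d - 1)
  set α := Real.logb d m
  have hd : 1 < d := hm.trans hmd
  have hd' : (1 : ℝ) < d := by exact_mod_cast hd
  have hκ : 0 < κ := div_pos (sub_pos.2 (by exact_mod_cast hmd)) (by linarith)
  rcases eq_or_ne a b with rfl | hab
  · simp only [dist_self]
    positivity
  set n := PiNat.firstDiff a b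
  have hagree : ∀ i < n, a i = b i := fun i hi => PiNat.apply_eq_of_lt_firstDiff hi
  have hsep : κ * ((d : ℝ) ^ (n + 1))⁻¹ ≤ dist (ofLowDigits hmd.le a) (ofLowDigits hmd.le b) := by
    rw [← div_eq_mul_inv]
    rcases (PiNat.apply_firstDiff_ne hab).lt_or_gt with h | h
    · rw [dist_comm, Real.dist_eq]
      exact (ofLowDigits_sub_ofLowDigits_ge hd hmd.le (fun i hi => (hagree i hi).symm) h).trans
        (le_abs_self _)
    · rw [Real.dist_eq]
      exact (ofLowDigits_sub_ofLowDigits_ge hd hmd.le hagree h).trans (le_abs_self _)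
  calc dist (Real.ofDigits a) (Real.ofDigits b) ≤ ((m : ℝ) ^ n)⁻¹ :=
        Real.abs_ofDigits_sub_ofDigits_le hagree
    _ = m / κ ^ α * (κ * ((d : ℝ) ^ (n + 1))⁻¹) ^ α := by
        rw [Real.mul_rpow hκ.le (by positivity),
          Real.inv_pow_rpow_logb (by linarith) hd'.ne' (by exact_mod_cast hm.le)]
        have : κ ^ α ≠ 0 := (Real.rpow_pos_of_pos hκ α).ne'
        field_simp
        ring
    _ ≤ m / κ ^ α * dist (ofLowDigits hmd.le a) (ofLowDigits hmd.le b) ^ α := by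
        have hα : 0 ≤ α := Real.logb_nonneg hd' (by exact_mod_cast hm.le)
        gcongr

theorem logb_le_dimH_range_ofLowDigits {m d : ℕ} (hm : 1 < m) (hmd : m < d) :
    ENNReal.ofReal (Real.logb d m) ≤ dimH (range (ofLowDigits hmd.le)) := by
  have hα : 0 < Real.logb d m :=
    Real.logb_pos (by exact_mod_cast hm.trans hmd) (by exact_mod_cast hm)
  have hr : 0 < (Real.logb d m).toNNReal := Real.toNNReal_pos.2 hα
  have hholder := dimH_range_le_of_edist_le hr (f := Real.ofDigits) (g := ofLowDigits hmd.le)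
    (C := (m / (((d : ℝ) - m) / (d - 1)) ^ Real.logb d m).toNNReal) fun a b => by
      rw [edist_dist, edist_dist, Real.coe_toNNReal _ hα.le,
        ENNReal.ofReal_rpow_of_nonneg dist_nonneg hα.le]
      exact (ENNReal.ofReal_le_ofReal (dist_ofDigits_le hm hmd a b)).trans_eq
        (ENNReal.ofReal_mul' (by positivity))
  have := (Real.one_le_dimH_range_ofDigits hm).trans hholder
  rwa [ENNReal.le_div_iff_mul_le (Or.inl (by exact_mod_cast hr.ne')) (Or.inl ENNReal.coe_ne_top),
    one_mul] at this

/-- Lemma 4: `dim_H(A_{m,d}) = log m / log d`. -/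
theorem dimH_lowDigitSet (m d : ℕ) (hd : 1 < d) (hm : 1 ≤ m) (hmd : m ≤ d) :
    dimH (lowDigitSet m d) = ENNReal.ofReal (Real.log m / Real.log d) := by
  rw [lowDigitSet_eq_range hmd, Real.log_div_log]
  refine le_antisymm (dimH_range_ofLowDigits_le hd hm hmd) ?_
  rcases hm.eq_or_lt with rfl | hm
  · simp
  rcases hmd.eq_or_lt with rfl | hmd
  · rw [Real.logb_self_eq_one (by exact_mod_cast hm), ENNReal.ofReal_one, ofLowDigits_self]
    exact Real.one_le_dimH_range_ofDigits hm
  · exact logb_le_dimH_range_ofLowDigits hm hmd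
end
end

section
/- Let m and d be positive integers with d > 1 and 1 ≤ m ≤ d. Then the Hausdorff dimension of A_{m,d} is at most (log m)/(log d). -/
open MeasureTheory

noncomputable section

/-!
Fixing the first `n` digits confines a point of `A_{m,d}` to a set of diameter `d⁻ⁿ`, so
`A_{m,d}` is covered by `mⁿ` such sets. For `s = log m / log d` we have `d ^ s = m`, so these
covers have `∑ diam ^ s ≤ mⁿ d^{-ns} = 1`; hence `μH[s] A_{m,d} ≤ 1 < ∞` and `dimH A_{m,d} ≤ s`.
-/

open Filter Real

section BoxCounting

variable {X : Type*} [EMetricSpace X] {ι : ℕ → Type*} [∀ n, Fintype (ι n)]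

theorem hausdorffMeasure_logb_le_one_of_cover [MeasurableSpace X] [BorelSpace X] {s : Set X}
    {m d : ℝ} (hm : 1 ≤ m) (hd : 1 < d)
    (t : ∀ n, ι n → Set X) (hcard : ∀ n, (Fintype.card (ι n) : ℝ) ≤ m ^ n)
    (hdiam : ∀ n i, Metric.ediam (t n i) ≤ ENNReal.ofReal (d ^ n)⁻¹)
    (hcover : ∀ n, s ⊆ ⋃ i, t n i) :
    μH[logb d m] s ≤ 1 := by
  have hs : 0 ≤ logb d m := logb_nonneg hd hm
  have hr : Tendsto (fun n : ℕ ↦ ENNReal.ofReal (d ^ n)⁻¹) atTop (nhds 0) := by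
    simpa only [inv_pow, ENNReal.ofReal_zero] using ENNReal.tendsto_ofReal
      (tendsto_pow_atTop_nhds_zero_of_lt_one (by positivity) (inv_lt_one_of_one_lt₀ hd))
  have hterm : ∀ n, ENNReal.ofReal (d ^ n)⁻¹ ^ logb d m = ENNReal.ofReal (m ^ n)⁻¹ := by
    intro n
    rw [ENNReal.ofReal_rpow_of_nonneg (by positivity) hs, inv_rpow (by positivity),
      ← rpow_pow_comm (by positivity), rpow_logb (by positivity) hd.ne' (by positivity)]
  have hsum : ∀ n, ∑ i, Metric.ediam (t n i) ^ logb d m ≤ 1 := fun n ↦ calc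
    ∑ i, Metric.ediam (t n i) ^ logb d m ≤ ∑ _i : ι n, ENNReal.ofReal (m ^ n)⁻¹ :=
      Finset.sum_le_sum fun i _ ↦ hterm n ▸ ENNReal.rpow_le_rpow (hdiam n i) hs
    _ = ENNReal.ofReal (Fintype.card (ι n) * (m ^ n)⁻¹) := by
      rw [Finset.sum_const, Finset.card_univ, nsmul_eq_mul, ENNReal.ofReal_mul (by positivity),
        ENNReal.ofReal_natCast]
    _ ≤ 1 := ENNReal.ofReal_le_one.2 <| mul_inv_le_one_of_le₀ (hcard n) (by positivity)
  calc μH[logb d m] s ≤ liminf (fun n ↦ ∑ i, Metric.ediam (t n i) ^ logb d m) atTop :=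
        Measure.hausdorffMeasure_le_liminf_sum _ s _ hr t (.of_forall hdiam) (.of_forall hcover)
    _ ≤ 1 := liminf_le_of_frequently_le (.of_forall hsum) (by isBoundedDefault)

theorem dimH_le_logb_of_cover {s : Set X} {m d : ℝ} (hm : 1 ≤ m) (hd : 1 < d)
    (t : ∀ n, ι n → Set X) (hcard : ∀ n, (Fintype.card (ι n) : ℝ) ≤ m ^ n)
    (hdiam : ∀ n i, Metric.ediam (t n i) ≤ ENNReal.ofReal (d ^ n)⁻¹)
    (hcover : ∀ n, s ⊆ ⋃ i, t n i) :
    dimH s ≤ ENNReal.ofReal (logb d m) := by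
  borelize X
  have hμ := hausdorffMeasure_logb_le_one_of_cover hm hd t hcard hdiam hcover
  rw [← coe_toNNReal _ (logb_nonneg hd hm)] at hμ
  exact dimH_le_of_hausdorffMeasure_ne_top (ne_top_of_le_ne_top ENNReal.one_ne_top hμ)

end BoxCounting

theorem ediam_image_ofDigits_le {b n : ℕ} {S : Set (ℕ → Fin b)}
    (hS : ∀ x ∈ S, ∀ y ∈ S, ∀ i < n, x i = y i) :
    Metric.ediam (ofDigits '' S) ≤ ENNReal.ofReal ((b : ℝ) ^ n)⁻¹ := by
  refine Metric.ediam_le_of_forall_dist_le ?_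
  rintro _ ⟨x, hx, rfl⟩ _ ⟨y, hy, rfl⟩
  exact abs_ofDigits_sub_ofDigits_le (hS x hx y hy)

def digitCylinder (d : ℕ) {n m : ℕ} (w : Fin n → Fin m) : Set ℝ :=
  ofDigits '' {a : ℕ → Fin d | ∀ i : Fin n, (a i : ℕ) = w i}

theorem ediam_digitCylinder_le (d : ℕ) {n m : ℕ} (w : Fin n → Fin m) :
    Metric.ediam (digitCylinder d w) ≤ ENNReal.ofReal ((d : ℝ) ^ n)⁻¹ :=
  ediam_image_ofDigits_le fun _ ha _ hb i hi ↦ Fin.ext <| (ha ⟨i, hi⟩).trans (hb ⟨i, hi⟩).symm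

theorem lowDigitSet_subset_iUnion_digitCylinder {m d : ℕ} (hmd : m ≤ d) (n : ℕ) :
    lowDigitSet m d ⊆ ⋃ w : Fin n → Fin m, digitCylinder d w := by
  rintro x ⟨b, hb, rfl⟩
  refine Set.mem_iUnion.2 ⟨fun i ↦ ⟨b i, hb i⟩, fun i ↦ ⟨b i, (hb i).trans_le hmd⟩, fun i ↦ rfl, ?_⟩
  simp only [ofDigits, ofDigitsTerm, div_eq_mul_inv]

/-- Upper bound in Lemma 4: `dim_H(A_{m,d}) ≤ log m / log d`. -/
theorem dimH_lowDigitSet_le (m d : ℕ) (hd : 1 < d) (hm : 1 ≤ m) (hmd : m ≤ d) :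
    dimH (lowDigitSet m d) ≤ ENNReal.ofReal (Real.log m / Real.log d) :=
  dimH_le_logb_of_cover (by exact_mod_cast hm) (by exact_mod_cast hd)
    (fun n (w : Fin n → Fin m) ↦ digitCylinder d w) (fun n ↦ by simp)
    (fun _ ↦ ediam_digitCylinder_le d) (lowDigitSet_subset_iUnion_digitCylinder hmd)
end
end

section
/- Let d be an integer greater than 1 and let n > 1. Let C = {c_1, ..., c_n} and C' = {c'_1, ..., c'_n} be cycles for the d-map, with representatives 0 < c_1 < c_2 < ... < c_n < 1 and 0 < c'_1 < c'_2 < ... < c'_n < 1 in [0,1). Let σ, σ' : {1, ..., n} → {1, ..., n} be the index maps determined by T_d(c_r) = c_{σ(r)} and T_d(c'_r) = c'_{σ'(r)} for all r. If σ = σ' and for every 1 ≤ r ≤ n the leading base-d digits agree, i.e. ⌊d·c_r⌋ = ⌊d·c'_r⌋, then c_r = c'_r for all r, so C = C'. -/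
open MeasureTheory

noncomputable section

/-!
On the representatives in `(0, 1)`, the relation `T_d(c_r) = c_{σ r}` reads
`c_{σ r} = d c_r - ⌊d c_r⌋`. Subtracting the same relation for `c'` and using equality of the
leading digits gives `c_{σ r} - c'_{σ r} = d (c_r - c'_r)`: the differences are expanded by the
factor `d > 1` along `σ`, yet stay bounded by `1`, so they all vanish.
-/

open Set

lemma dMap_coe (d : ℕ) (x : ℝ) : dMap d (x : UnitAddCircle) = ((d * x : ℝ) : UnitAddCircle) := by
  rw [dMap, ← nsmul_eq_mul, AddCircle.coe_nsmul]

lemma fract_mul_eq_of_dMap_coe_eq {d : ℕ} {x y : ℝ} (hy : y ∈ Ico (0 : ℝ) 1)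
    (h : dMap d (x : UnitAddCircle) = (y : UnitAddCircle)) : Int.fract (d * x) = y := by
  rw [dMap_coe, ← AddCircle.coe_fract] at h
  exact (AddCircle.coe_eq_coe_iff_of_mem_Ico (p := 1) (a := 0)
    (by simpa using And.intro (Int.fract_nonneg (d * x)) (Int.fract_lt_one (d * x)))
    (by simpa using hy)).1 h

lemma fract_mul_sub_fract_mul_of_floor_eq (k x x' : ℝ) (h : ⌊k * x⌋ = ⌊k * x'⌋) :
    Int.fract (k * x) - Int.fract (k * x') = k * (x - x') := by
  rw [Int.fract, Int.fract, h]
  ring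

lemma eq_zero_of_bounded_of_map_eq_mul {α : Type*} {f : α → α} {g : α → ℝ} {k B : ℝ}
    (hk : 1 < k) (hB : ∀ a, |g a| ≤ B) (hf : ∀ a, g (f a) = k * g a) (a : α) : g a = 0 := by
  have hiter : ∀ m : ℕ, g (f^[m] a) = k ^ m * g a := by
    intro m
    induction m with
    | zero => simp
    | succ m ih => rw [Function.iterate_succ_apply', hf, ih, pow_succ]; ring
  by_contra hne
  have hpos : 0 < |g a| := abs_pos.mpr hne
  obtain ⟨m, hm⟩ := pow_unbounded_of_one_lt (B / |g a|) hk
  have hgrow : B < k ^ m * |g a| := (div_lt_iff₀ hpos).1 hm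
  have hbound := hB (f^[m] a)
  rw [hiter, abs_mul, abs_of_pos (pow_pos (zero_lt_one.trans hk) m)] at hbound
  linarith

theorem cycle_determined_by_sigma_and_digits_general (d n : ℕ) (hd : 1 < d)
    (c c' : Fin n → ℝ) (σ : Fin n → Fin n)
    (hrange : ∀ i, c i ∈ Set.Ioo (0 : ℝ) 1) (hrange' : ∀ i, c' i ∈ Set.Ioo (0 : ℝ) 1)
    (hσ : ∀ r : Fin n, dMap d ((c r : ℝ) : UnitAddCircle) = ((c (σ r) : ℝ) : UnitAddCircle))
    (hσ' : ∀ r : Fin n, dMap d ((c' r : ℝ) : UnitAddCircle) = ((c' (σ r) : ℝ) : UnitAddCircle))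
    (hdig : ∀ r : Fin n, ⌊(d : ℝ) * c r⌋ = ⌊(d : ℝ) * c' r⌋) :
    ∀ r : Fin n, c r = c' r := by
  have hexpand : ∀ r, c (σ r) - c' (σ r) = d * (c r - c' r) := fun r => by
    rw [← fract_mul_eq_of_dMap_coe_eq (Ioo_subset_Ico_self (hrange _)) (hσ r),
      ← fract_mul_eq_of_dMap_coe_eq (Ioo_subset_Ico_self (hrange' _)) (hσ' r)]
    exact fract_mul_sub_fract_mul_of_floor_eq _ _ _ (hdig r)
  have hbound : ∀ r, |c r - c' r| ≤ 1 := fun r => by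
    obtain ⟨⟨h0, h1⟩, h0', h1'⟩ := And.intro (hrange r) (hrange' r)
    rw [abs_le]; constructor <;> linarith
  intro r
  exact sub_eq_zero.1 (eq_zero_of_bounded_of_map_eq_mul (by exact_mod_cast hd) hbound hexpand r)

/-- Lemma 3 (rigidity): a cycle for the `d`-map is determined by its index map `σ`
(the combinatorics of how the `d`-map permutes the ordered points) together with the
leading base-`d` digit of each of its points. -/
theorem cycle_determined_by_sigma_and_digits (d n : ℕ) (hd : 1 < d) (hn : 1 < n)
    (c c' : Fin n → ℝ) (σ : Fin n → Fin n)
    (hmono : StrictMono c) (hmono' : StrictMono c')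
    (hrange : ∀ i, c i ∈ Set.Ioo (0 : ℝ) 1) (hrange' : ∀ i, c' i ∈ Set.Ioo (0 : ℝ) 1)
    (hcyc : IsCycle d (Finset.image (fun i : Fin n => ((c i : ℝ) : UnitAddCircle)) Finset.univ))
    (hcyc' : IsCycle d (Finset.image (fun i : Fin n => ((c' i : ℝ) : UnitAddCircle)) Finset.univ))
    (hσ : ∀ r : Fin n, dMap d ((c r : ℝ) : UnitAddCircle) = ((c (σ r) : ℝ) : UnitAddCircle))
    (hσ' : ∀ r : Fin n, dMap d ((c' r : ℝ) : UnitAddCircle) = ((c' (σ r) : ℝ) : UnitAddCircle))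
    (hdig : ∀ r : Fin n, ⌊(d : ℝ) * c r⌋ = ⌊(d : ℝ) * c' r⌋) :
    ∀ r : Fin n, c r = c' r :=
  cycle_determined_by_sigma_and_digits_general d n hd c c' σ hrange hrange' hσ hσ' hdig
end
end
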